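/- arXiv:math/0604133 — 4 statements merged into one kernel-verified Lean document; each statement's English description precedes it below -/
import Mathlib

section
/- The addition on 𝒟_n is associative: for all D, D', D'' ∈ 𝒟_n, (D + D') + D'' = D + (D' + D''). -/
/-- `D ∈ 𝒟ₙ`: a finite set `D ⊆ ℕ₀ⁿ` (given as a `Finset`) such that whenever `d ∈ D`
and `dᵢ ≠ 0`, then `d − eᵢ ∈ D`. -/
def IsDset {n : ℕ} (D : Finset (Fin n → ℕ)) : Prop :=
  ∀ d ∈ D, ∀ i : Fin n, d i ≠ 0 → d - Pi.single i 1 ∈ D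

/-- `#(p̂⁻¹(dh) ∩ D)`: the number of elements of `D` in the fiber over `dh` of the
projection `p̂` forgetting the first coordinate. -/
def fiberCard {n : ℕ} (D : Finset (Fin (n + 1) → ℕ)) (dh : Fin n → ℕ) : ℕ :=
  (D.filter (fun d => Fin.tail d = dh)).card

/-- The addition `D + D'` on `𝒟ₙ`: the set of all `d ∈ ℕ₀ⁿ` such that
`p̂(d) ∈ p̂(D) ∪ p̂(D')` and `d₁ < #(p̂⁻¹(p̂ d) ∩ D) + #(p̂⁻¹(p̂ d) ∩ D')`,
realized as a `Finset`: for each `dh ∈ p̂(D) ∪ p̂(D')` it collects the tuples with tail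
`dh` and first coordinate `< fiberCard D dh + fiberCard D' dh`; so `d ∈ addD D D'` iff
`Fin.tail d ∈ p̂(D) ∪ p̂(D')` and `d 0 < fiberCard D (Fin.tail d) + fiberCard D' (Fin.tail d)`. -/
def addD {n : ℕ} (D D' : Finset (Fin (n + 1) → ℕ)) : Finset (Fin (n + 1) → ℕ) :=
  (D.image (fun d => Fin.tail d) ∪ D'.image (fun d => Fin.tail d)).biUnion
    (fun dh => (Finset.range (fiberCard D dh + fiberCard D' dh)).image
      (fun j => Fin.cons j dh))

lemma mem_tails {n : ℕ} {D : Finset (Fin (n + 1) → ℕ)} {dh : Fin n → ℕ} :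
    dh ∈ D.image (fun d => Fin.tail d) ↔ 0 < fiberCard D dh := by
  simp [fiberCard, Finset.card_pos, Finset.filter_nonempty_iff, Finset.mem_image]


lemma mem_addD {n : ℕ} {D D' : Finset (Fin (n + 1) → ℕ)} {d : Fin (n + 1) → ℕ} :
    d ∈ addD D D' ↔ d 0 < fiberCard D (Fin.tail d) + fiberCard D' (Fin.tail d) := by
  constructor
  · rintro h
    simp only [addD, Finset.mem_biUnion, Finset.mem_image, Finset.mem_range] at h
    obtain ⟨dh, hdh, j, hj, rfl⟩ := h
    simpa using hj
  · intro h
    simp only [addD, Finset.mem_biUnion, Finset.mem_union]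
    refine ⟨Fin.tail d, ?_, ?_⟩
    · rw [mem_tails, mem_tails]; omega
    · simp only [Finset.mem_image, Finset.mem_range]
      exact ⟨d 0, h, by simp [Fin.cons_self_tail]⟩

lemma fiberCard_addD {n : ℕ} (D D' : Finset (Fin (n + 1) → ℕ)) (dh : Fin n → ℕ) :
    fiberCard (addD D D') dh = fiberCard D dh + fiberCard D' dh := by
  unfold fiberCard
  have : (addD D D').filter (fun d => Fin.tail d = dh) =
      (Finset.range (fiberCard D dh + fiberCard D' dh)).image (fun j => Fin.cons j dh) := by
    ext d
    simp only [Finset.mem_filter, mem_addD, Finset.mem_image, Finset.mem_range]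
    constructor
    · rintro ⟨h1, rfl⟩
      exact ⟨d 0, h1, by simp [Fin.cons_self_tail]⟩
    · rintro ⟨j, hj, rfl⟩
      simpa using hj
  rw [this, Finset.card_image_of_injective _ (fun a b h => by
    simpa using congrFun h 0), Finset.card_range]; rfl

/-- Proposition (b): the addition on `𝒟ₙ` is associative:
`(D + D') + D'' = D + (D' + D'')`. -/
theorem stmt_7 {n : ℕ} (D D' D'' : Finset (Fin (n + 1) → ℕ))
    (hD : IsDset D) (hD' : IsDset D') (hD'' : IsDset D'') :
    addD (addD D D') D'' = addD D (addD D' D'') := by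
  ext d
  simp [mem_addD, fiberCard_addD]
  omega
end

section
/- Let k be a field and let A be a finite set of points of k^n. Then the set D(A) belongs to 𝒟_n: it is a finite subset of ℕ₀^n such that whenever d ∈ D(A) and d_i ≠ 0, then d − e_i ∈ D(A). -/
variable {k : Type*} [Field k] [DecidableEq k]

/-- The set `D(A) ⊆ ℕ₀ⁿ` attached to a finite set of points `A ⊆ kⁿ`, defined by
induction on `n`.  For `n = 0`, `D(A)` is empty if `A` is and the single point of `ℕ₀⁰`
otherwise (so that for `n = 1` one gets `D(A) = {0, 1, …, #A − 1}`).  For `n + 1`: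
writing `p(A)` for the set of first coordinates of `A` and
`H a₁ = p⁻¹(a₁) ∩ A ⊆ kⁿ` (via the projection `Fin.tail` forgetting the first
coordinate), `D(A) = Σ_{a₁ ∈ p(A)} D(H a₁)`, the sum with respect to the addition `+`
on `𝒟`; spelled out via the closed formula for such sums, `d ∈ D(A)` iff
`Fin.tail d ∈ ⋃_{a₁ ∈ p(A)} D(H a₁)` and `d 0 < #{a₁ ∈ p(A) : Fin.tail d ∈ D(H a₁)}`. -/
def DofA : (n : ℕ) → Finset (Fin n → k) → Finset (Fin n → ℕ)
  | 0, A => A.image (fun _ => (fun _ => 0))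
  | (n + 1), A =>
      ((A.image (fun a => a 0)).biUnion
          (fun a1 => DofA n ((A.filter (fun a => a 0 = a1)).image (fun a => Fin.tail a)))).biUnion
        (fun dh =>
          (Finset.range
              (((A.image (fun a => a 0)).filter
                  (fun a1 =>
                    dh ∈ DofA n ((A.filter (fun a => a 0 = a1)).image (fun a => Fin.tail a)))).card)).image
            (fun j => Fin.cons j dh))

lemma cons_sub_zero (j : ℕ) {n : ℕ} (dh : Fin n → ℕ) :
    (Fin.cons j dh : Fin (n+1) → ℕ) - Pi.single (0 : Fin (n + 1)) 1 = Fin.cons (j - 1) dh := by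
  funext x
  refine Fin.cases ?_ (fun x => ?_) x
  · simp [Pi.single_eq_same]
  · simp [Pi.single_eq_of_ne (Fin.succ_ne_zero x)]

lemma cons_sub_succ (j : ℕ) {n : ℕ} (dh : Fin n → ℕ) (i : Fin n) :
    (Fin.cons j dh : Fin (n+1) → ℕ) - Pi.single i.succ 1 = Fin.cons j (dh - Pi.single i 1) := by
  funext x
  refine Fin.cases ?_ (fun x => ?_) x
  · simp [Pi.single_eq_of_ne (Ne.symm (Fin.succ_ne_zero i))]
  · simp only [Pi.sub_apply, Fin.cons_succ]
    congr 1
    by_cases h : x = i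
    · subst h; simp
    · rw [Pi.single_eq_of_ne h, Pi.single_eq_of_ne (fun hs => h (Fin.succ_injective _ hs))]

/-- For a finite set `A` of points of `kⁿ`, the set `D(A)` belongs to `𝒟ₙ`: it is a
finite subset of `ℕ₀ⁿ` (a `Finset`) such that whenever `d ∈ D(A)` and `dᵢ ≠ 0`, then
`d − eᵢ ∈ D(A)`. -/
theorem stmt_11 (n : ℕ) (A : Finset (Fin n → k)) :
    IsDset (DofA n A) := by
  induction n with
  | zero => intro d hd i; exact i.elim0
  | succ n ih =>
    intro d hd i hdi
    simp only [DofA, Finset.mem_biUnion, Finset.mem_image, Finset.mem_range] at hd ⊢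
    obtain ⟨dh, hdh, j, hj, hcons⟩ := hd
    subst hcons
    revert hdi
    refine Fin.cases ?_ (fun i' => ?_) i <;> intro hdi
    · refine ⟨dh, hdh, j - 1, ?_, ?_⟩
      · exact lt_of_le_of_lt (Nat.sub_le _ _) hj
      · exact (cons_sub_zero j dh).symm
    · have hne : dh i' ≠ 0 := by simpa using hdi
      obtain ⟨a1, ha1, hdha1⟩ := hdh
      refine ⟨dh - Pi.single i' 1, ⟨a1, ha1, ih _ _ hdha1 i' hne⟩, j, ?_, (cons_sub_succ j dh i').symm⟩
      refine lt_of_lt_of_le hj (Finset.card_le_card ?_)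
      intro a ha
      rw [Finset.mem_filter] at ha ⊢
      exact ⟨ha.1, ih _ _ ha.2 i' hne⟩
end

section
/- Let k be a field, A a finite set of points of k^n, and let λ be an element of the limiting set E(D(A)). Then for every β ∈ ∪_{λ' ≤ λ} (λ' + ℕ₀^n), where λ' runs over elements of E(D(A)) with λ' ≤ λ in the lexicographic ordering, there exists a polynomial f_β ∈ k[X_1,…,X_n] such that: (i) the leading term of f_β in the lexicographic ordering (with X_1 < X_2 < … < X_n) is X^β; (ii) the exponents of all lower terms of f_β lie in ℕ₀^n − ∪_{λ' ≤ λ} (λ' + ℕ₀^n); and (iii) f_β(a) = 0 for all a ∈ A. -/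
variable {k : Type*} [Field k] [DecidableEq k]

/-- The strict lexicographic order on exponent vectors corresponding to the
lexicographic monomial ordering with `X₁ < X₂ < … < Xₙ`: the exponents of the
variables with *larger* index are compared first. -/
def lexLt {n : ℕ} (α β : Fin n → ℕ) : Prop :=
  ∃ i : Fin n, α i < β i ∧ ∀ j : Fin n, i < j → α j = β j

/-- The (non-strict) lexicographic order corresponding to `X₁ < X₂ < … < Xₙ`. -/
def lexLe {n : ℕ} (α β : Fin n → ℕ) : Prop :=
  lexLt α β ∨ α = β

/-- Membership in the limiting set `E(D)`: `β ∉ D` and whenever `βᵢ ≠ 0`,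
then `β − eᵢ ∈ D`. -/
def inE {n : ℕ} (D : Finset (Fin n → ℕ)) (β : Fin n → ℕ) : Prop :=
  β ∉ D ∧ ∀ i : Fin n, β i ≠ 0 → β - Pi.single i 1 ∈ D

/-- The coefficient of the monomial `X^α` in the multivariate polynomial `f`,
with the exponent given as a function `Fin n → ℕ`. -/
noncomputable def coeffv {n : ℕ} {R : Type*} [CommSemiring R]
    (f : MvPolynomial (Fin n) R) (α : Fin n → ℕ) : R :=
  MvPolynomial.coeff (Finsupp.equivFunOnFinite.symm α) f

/-!
For `β ∉ D(A)` one builds a polynomial vanishing on `A` with lexicographic leading term `X^β`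
by induction on `n`. Write `β = (j, δ)` with `j` the exponent of the first variable. The first
coordinates `x` of points of `A` with `δ ∈ D(H x)` number at most `j`, so some monic `u` of
degree `j` vanishes at all of them; at the other `x`, induction gives `g_x` with leading term
`X^δ` vanishing on `H x`. Then `u` times a Lagrange interpolation of the `g_x`, both in the
first variable, does the job. Every `β` above some `λ' ∈ E(D(A))` lies outside `D(A)`, since
`D(A)` is closed under lowering coordinates; cancelling the lower terms that lie in
`⋃ (λ' + ℕ₀ⁿ)` by induction along the well-founded lexicographic order gives the theorem.
-/

open MvPolynomial Finset

section LexOrder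

variable {n : ℕ}

theorem lexLt_iff_toColex_lt {α β : Fin n → ℕ} : lexLt α β ↔ toColex α < toColex β :=
  exists_congr fun _ => and_comm

theorem lexLt_wellFounded : WellFounded (@lexLt n) :=
  Subrelation.wf lexLt_iff_toColex_lt.mp
    (InvImage.wf (toColex : (Fin n → ℕ) → Colex (Fin n → ℕ)) wellFounded_lt)

theorem lexLt_trans {α β γ : Fin n → ℕ} (h₁ : lexLt α β) (h₂ : lexLt β γ) : lexLt α γ :=
  lexLt_iff_toColex_lt.mpr ((lexLt_iff_toColex_lt.mp h₁).trans (lexLt_iff_toColex_lt.mp h₂))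

theorem lexLt_irrefl (α : Fin n → ℕ) : ¬ lexLt α α :=
  fun h => lt_irrefl _ (lexLt_iff_toColex_lt.mp h)

theorem lexLt_cons_of_lt {m j : ℕ} (γ : Fin n → ℕ) (h : m < j) :
    lexLt (Fin.cons m γ : Fin (n + 1) → ℕ) (Fin.cons j γ) :=
  ⟨0, h, Fin.cases (by simp) fun _ _ => rfl⟩

theorem lexLt_cons_of_lexLt {γ δ : Fin n → ℕ} (m j : ℕ) (h : lexLt γ δ) :
    lexLt (Fin.cons m γ : Fin (n + 1) → ℕ) (Fin.cons j δ) := by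
  obtain ⟨i, hi, heq⟩ := h
  exact ⟨i.succ, hi, Fin.cases (by simp) fun l hl => heq l (Fin.succ_lt_succ_iff.mp hl)⟩

end LexOrder

section Dsets

variable {n : ℕ} {K : Type*} [DecidableEq K]

theorem IsDset.mem_of_le {D : Finset (Fin n → ℕ)} (hD : IsDset D) {d d' : Fin n → ℕ}
    (hd : d ∈ D) (hle : d' ≤ d) : d' ∈ D := by
  induction d using WellFoundedLT.induction with
  | _ d ih =>
  obtain rfl | hlt := hle.eq_or_lt
  · exact hd
  obtain ⟨i, hi⟩ := (Pi.lt_def.mp hlt).2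
  have hsub : ∀ j, (d - Pi.single i 1 : Fin n → ℕ) j = d j - (Pi.single i 1 : Fin n → ℕ) j :=
    fun _ => Pi.sub_apply _ _ _
  refine ih _ (Pi.lt_def.mpr ⟨fun j => ?_, i, ?_⟩) (hD d hd i (by omega)) fun j => ?_
  · rw [hsub]; exact Nat.sub_le _ _
  · rw [hsub, Pi.single_eq_same]; omega
  · rw [hsub]
    rcases eq_or_ne j i with rfl | hj
    · rw [Pi.single_eq_same]; exact Nat.le_sub_one_of_lt hi
    · rw [Pi.single_eq_of_ne hj]; exact hle j

def fiber (A : Finset (Fin (n + 1) → K)) (x : K) : Finset (Fin n → K) :=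
  (A.filter (fun a => a 0 = x)).image (fun a => Fin.tail a)

theorem tail_mem_fiber {A : Finset (Fin (n + 1) → K)} {a : Fin (n + 1) → K} (ha : a ∈ A) :
    Fin.tail a ∈ fiber A (a 0) :=
  mem_image_of_mem _ (mem_filter.mpr ⟨ha, rfl⟩)

theorem cons_mem_DofA_succ {A : Finset (Fin (n + 1) → K)} {j : ℕ} {δ : Fin n → ℕ} :
    Fin.cons j δ ∈ DofA (n + 1) A ↔
      j < #{x ∈ A.image (· 0) | δ ∈ DofA n (fiber A x)} := by
  rw [DofA]
  simp only [mem_biUnion, mem_image, mem_range, Fin.cons_inj]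
  constructor
  · rintro ⟨δ', -, j', hj', rfl, rfl⟩
    exact hj'
  · intro hj
    obtain ⟨x, hx⟩ := card_pos.mp (Nat.zero_lt_of_lt hj)
    obtain ⟨hxA, hδ⟩ := mem_filter.mp hx
    exact ⟨δ, ⟨x, mem_image.mp hxA, hδ⟩, j, hj, rfl, rfl⟩

theorem isDset_DofA (A : Finset (Fin n → K)) : IsDset (DofA n A) := by
  induction n with
  | zero => exact fun _ _ i => i.elim0
  | succ n ih =>
    intro d hd i hi
    cases d using Fin.consCases with
    | cons j δ =>
    rw [cons_mem_DofA_succ] at hd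
    cases i using Fin.cases with
    | zero =>
      have : (Fin.cons j δ : Fin (n + 1) → ℕ) - Pi.single 0 1 = Fin.cons (j - 1) δ := by
        ext l; cases l using Fin.cases <;> simp
      rw [this, cons_mem_DofA_succ]
      omega
    | succ i =>
      have : (Fin.cons j δ : Fin (n + 1) → ℕ) - Pi.single i.succ 1 =
          Fin.cons j (δ - Pi.single i 1) := by
        ext l; cases l using Fin.cases <;> simp [Pi.single_apply]
      rw [this, cons_mem_DofA_succ]
      exact hd.trans_le (card_le_card (monotone_filter_right _ fun _ _ hx => ih _ _ hx i hi))

end Dsets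

section LeadingTerms

variable {n : ℕ} {R : Type*} [CommRing R]

def HasLeadTerm (f : MvPolynomial (Fin n) R) (β : Fin n → ℕ) : Prop :=
  coeffv f β = 1 ∧ ∀ γ, coeffv f γ ≠ 0 → γ ≠ β → lexLt γ β

theorem HasLeadTerm.lexLt_of_coeffv_ne_zero {f : MvPolynomial (Fin n) R} {β γ δ : Fin n → ℕ}
    (hf : HasLeadTerm f β) (hβ : lexLt β δ) (hγ : coeffv f γ ≠ 0) : lexLt γ δ := by
  rcases eq_or_ne γ β with rfl | hne
  · exact hβ
  · exact lexLt_trans (hf.2 γ hγ hne) hβ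

def supportv (f : MvPolynomial (Fin n) R) : Finset (Fin n → ℕ) :=
  f.support.image (⇑)

theorem mem_supportv {f : MvPolynomial (Fin n) R} {γ : Fin n → ℕ} :
    γ ∈ supportv f ↔ coeffv f γ ≠ 0 := by
  constructor
  · intro h
    obtain ⟨a, ha, rfl⟩ := mem_image.mp h
    rwa [coeffv, Finsupp.equivFunOnFinite_symm_coe, ← mem_support_iff]
  · exact fun h => mem_image.mpr ⟨_, mem_support_iff.mpr h, Finsupp.coe_equivFunOnFinite_symm _⟩

/-- Each lower term `X^γ` with `γ ∈ L` is cancelled by a polynomial of `I` with leading term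
`X^γ`, obtained by induction along the well-founded lexicographic order. -/
theorem exists_hasLeadTerm_lower_notMem (I : Ideal (MvPolynomial (Fin n) R))
    (L : Set (Fin n → ℕ)) (hL : ∀ β ∈ L, ∃ f ∈ I, HasLeadTerm f β) {β : Fin n → ℕ}
    (hβ : β ∈ L) : ∃ f ∈ I, HasLeadTerm f β ∧ ∀ γ, coeffv f γ ≠ 0 → γ ≠ β → γ ∉ L := by
  classical
  induction β using lexLt_wellFounded.induction with
  | _ β ih =>
  obtain ⟨f₀, hf₀I, hf₀⟩ := hL β hβ
  set bad := {γ ∈ supportv f₀ | γ ≠ β ∧ γ ∈ L}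
  have hbad : ∀ γ ∈ bad, lexLt γ β ∧ γ ∈ L := fun γ hγ => by
    obtain ⟨hγf, hγβ, hγL⟩ := mem_filter.mp hγ
    exact ⟨hf₀.2 γ (mem_supportv.mp hγf) hγβ, hγL⟩
  choose! g hgI hg hgL using fun γ (hγ : γ ∈ bad) => ih γ (hbad γ hγ).1 (hbad γ hγ).2
  set f := f₀ - ∑ γ ∈ bad, C (coeffv f₀ γ) * g γ
  have hcoeff : ∀ δ, coeffv f δ = coeffv f₀ δ - ∑ γ ∈ bad, coeffv f₀ γ * coeffv (g γ) δ := by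
    intro δ
    simp only [f, coeffv, coeff_sub, coeff_sum, coeff_C_mul]
  have hgβ : ∀ γ ∈ bad, coeffv (g γ) β = 0 := fun γ hγ =>
    not_not.mp fun h => lexLt_irrefl β ((hg γ hγ).lexLt_of_coeffv_ne_zero (hbad γ hγ).1 h)
  refine ⟨f, sub_mem hf₀I (sum_mem fun γ hγ => I.mul_mem_left _ (hgI γ hγ)),
    ⟨?_, fun δ hδ hδβ => ?_⟩, fun δ hδ hδβ hδL => hδ ?_⟩
  · rw [hcoeff, sum_eq_zero fun γ hγ => by rw [hgβ γ hγ, mul_zero], sub_zero, hf₀.1]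
  · rw [hcoeff] at hδ
    by_cases h₀ : coeffv f₀ δ = 0
    · rw [h₀, zero_sub, neg_ne_zero] at hδ
      obtain ⟨γ, hγ, hne⟩ := exists_ne_zero_of_sum_ne_zero hδ
      exact (hg γ hγ).lexLt_of_coeffv_ne_zero (hbad γ hγ).1 (right_ne_zero_of_mul hne)
    · exact hf₀.2 δ h₀ hδβ
  · have hsum : ∑ γ ∈ bad, coeffv f₀ γ * coeffv (g γ) δ = if δ ∈ bad then coeffv f₀ δ else 0 := by
      rw [← sum_ite_eq bad δ (coeffv f₀)]
      refine sum_congr rfl fun γ hγ => ?_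
      rcases eq_or_ne δ γ with rfl | hne
      · rw [(hg δ hγ).1, mul_one, if_pos rfl]
      · rw [if_neg hne, not_not.mp fun h => hgL γ hγ δ h hne hδL, mul_zero]
    rw [hcoeff, hsum]
    split_ifs with hδbad
    · exact sub_self _
    · rw [sub_zero, ← not_ne_iff, ← mem_supportv]
      exact fun h => hδbad (mem_filter.mpr ⟨h, hδβ, hδL⟩)

theorem coeffv_monomial (δ γ : Fin n → ℕ) (c : R) :
    coeffv (monomial (Finsupp.equivFunOnFinite.symm δ) c) γ = if δ = γ then c else 0 := by
  simp only [coeffv, coeff_monomial, EmbeddingLike.apply_eq_iff_eq]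

theorem HasLeadTerm.lexLt_of_coeffv_sub_monomial_ne_zero {g : MvPolynomial (Fin n) R}
    {δ γ : Fin n → ℕ} (hg : HasLeadTerm g δ)
    (hγ : coeffv (g - monomial (Finsupp.equivFunOnFinite.symm δ) 1) γ ≠ 0) : lexLt γ δ := by
  have hsub : coeffv (g - monomial (Finsupp.equivFunOnFinite.symm δ) 1) γ =
      coeffv g γ - if δ = γ then 1 else 0 := by
    rw [← coeffv_monomial δ γ (1 : R)]; simp only [coeffv, coeff_sub]
  rw [hsub] at hγ
  split_ifs at hγ with h
  · exact absurd (h ▸ hg.1 : coeffv g γ = 1) (by simpa [sub_eq_zero] using hγ)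
  · exact hg.2 γ (by simpa using hγ) (Ne.symm h)

theorem HasLeadTerm.add_of_lexLt {f g : MvPolynomial (Fin n) R}
    {β : Fin n → ℕ} (hf : HasLeadTerm f β) (hg : ∀ γ, coeffv g γ ≠ 0 → lexLt γ β) :
    HasLeadTerm (f + g) β := by
  have hadd : ∀ γ, coeffv (f + g) γ = coeffv f γ + coeffv g γ := fun _ => coeff_add _ _ _
  refine ⟨?_, fun γ hγ hγβ => ?_⟩
  · rw [hadd, hf.1, not_not.mp fun h => lexLt_irrefl β (hg β h), add_zero]
  · rw [hadd] at hγ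
    by_cases hfγ : coeffv f γ = 0
    · exact hg γ (by simpa [hfγ] using hγ)
    · exact hf.2 γ hfγ hγβ

end LeadingTerms

section Interpolation

variable {n : ℕ} {R : Type*} [CommRing R]

/-- The polynomial `u(X₀) · q(X₁, …, Xₙ)`. -/
noncomputable def mulTail (u : Polynomial R) (q : MvPolynomial (Fin n) R) :
    MvPolynomial (Fin (n + 1)) R :=
  (finSuccEquiv R n).symm (Polynomial.map C u * Polynomial.C q)

theorem coeffv_mulTail (u : Polynomial R) (q : MvPolynomial (Fin n) R)
    (m : ℕ) (γ : Fin n → ℕ) : coeffv (mulTail u q) (Fin.cons m γ) = u.coeff m * coeffv q γ := by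
  have hcons : Finsupp.equivFunOnFinite.symm (Fin.cons m γ : Fin (n + 1) → ℕ) =
      Finsupp.cons m (Finsupp.equivFunOnFinite.symm γ) := by
    rw [Finsupp.cons, Finsupp.coe_equivFunOnFinite_symm]
  rw [coeffv, hcons, ← finSuccEquiv_coeff_coeff, mulTail, AlgEquiv.apply_symm_apply,
    Polynomial.coeff_mul_C, Polynomial.coeff_map, coeff_C_mul, coeffv]

theorem eval_mulTail (u : Polynomial R) (q : MvPolynomial (Fin n) R)
    (x : R) (b : Fin n → R) : eval (Fin.cons x b) (mulTail u q) = u.eval x * eval b q := by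
  have hC : (eval b).comp C = RingHom.id R := RingHom.ext fun _ => eval_C _
  rw [eval_eq_eval_mv_eval', mulTail, AlgEquiv.apply_symm_apply, Polynomial.map_mul,
    Polynomial.map_map, hC, Polynomial.map_id, Polynomial.map_C, Polynomial.eval_mul,
    Polynomial.eval_C]

theorem hasLeadTerm_mulTail_monomial {u : Polynomial R} (hu : u.Monic) (δ : Fin n → ℕ) :
    HasLeadTerm (mulTail u (monomial (Finsupp.equivFunOnFinite.symm δ) 1))
      (Fin.cons u.natDegree δ) := by
  refine ⟨by rw [coeffv_mulTail, coeffv_monomial, if_pos rfl, mul_one, hu.coeff_natDegree], ?_⟩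
  intro α hα hαβ
  cases α using Fin.consCases with
  | cons m γ =>
  rw [coeffv_mulTail, coeffv_monomial] at hα
  split_ifs at hα with hδγ
  · subst hδγ
    have hm : m ≠ u.natDegree := fun h => hαβ (h ▸ rfl)
    exact lexLt_cons_of_lt δ ((Polynomial.le_natDegree_of_ne_zero (by simpa using hα)).lt_of_ne hm)
  · exact (hα (mul_zero _)).elim

theorem exists_monic_natDegree_eq_eval_eq_zero [Nontrivial R] (T : Finset R) {j : ℕ} (hT : #T ≤ j) :
    ∃ u : Polynomial R, u.Monic ∧ u.natDegree = j ∧ ∀ t ∈ T, u.eval t = 0 := by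
  refine ⟨Polynomial.X ^ (j - #T) * ∏ t ∈ T, (Polynomial.X - Polynomial.C t),
    (Polynomial.monic_X_pow _).mul (Polynomial.monic_prod_X_sub_C _ _), ?_, fun t ht => ?_⟩
  · rw [(Polynomial.monic_X_pow _).natDegree_mul (Polynomial.monic_prod_X_sub_C _ _),
      Polynomial.natDegree_X_pow, Polynomial.natDegree_finsetProd_X_sub_C_eq_card]
    omega
  · rw [Polynomial.eval_mul, Polynomial.eval_prod, prod_eq_zero ht (by simp), mul_zero]

theorem sum_eval_basis_mul {K : Type*} [Field K] [DecidableEq K] {S : Finset K} {s : K}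
    (hs : s ∈ S) (y : K → K) : ∑ s' ∈ S, (Lagrange.basis S id s').eval s * y s' = y s := by
  simpa [Lagrange.interpolate_apply, Polynomial.eval_finsetSum, mul_comm] using
    Lagrange.eval_interpolate_at_node y (Set.injOn_id _) hs

end Interpolation

theorem exists_hasLeadTerm_cons {n : ℕ} {K : Type*} [Field K] (T S : Finset K) {j : ℕ}
    (hT : #T ≤ j) {δ : Fin n → ℕ} (g : K → MvPolynomial (Fin n) K)
    (hg : ∀ s ∈ S, HasLeadTerm (g s) δ) :
    ∃ f : MvPolynomial (Fin (n + 1)) K, HasLeadTerm f (Fin.cons j δ) ∧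
      (∀ t ∈ T, ∀ b, eval (Fin.cons t b) f = 0) ∧
      ∀ s ∈ S, ∀ b, eval b (g s) = 0 → eval (Fin.cons s b) f = 0 := by
  classical
  obtain ⟨u, hu, rfl, huT⟩ := exists_monic_natDegree_eq_eval_eq_zero T hT
  set M : MvPolynomial (Fin n) K := monomial (Finsupp.equivFunOnFinite.symm δ) 1
  -- `u(X₀) · (M + ∑ₛ Lₛ(X₀) (g s - M))` equals `u(X₀) · g s` on the fibre `X₀ = s`, and the
  -- monomial `M` keeps the `X^δ`-part equal to `u(X₀) X^δ` even when `S` is empty.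
  refine ⟨mulTail u M + ∑ s ∈ S, mulTail (u * Lagrange.basis S id s) (g s - M),
    (hasLeadTerm_mulTail_monomial hu δ).add_of_lexLt fun α hα => ?_, fun t ht b => ?_,
    fun s hs b hgs => ?_⟩
  · cases α using Fin.consCases with
    | cons m γ =>
    simp only [coeffv, coeff_sum] at hα
    obtain ⟨s, hs, hne⟩ := exists_ne_zero_of_sum_ne_zero hα
    rw [← coeffv, coeffv_mulTail] at hne
    exact lexLt_cons_of_lexLt _ _ ((hg s hs).lexLt_of_coeffv_sub_monomial_ne_zero
      (right_ne_zero_of_mul hne))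
  · simp [eval_mulTail, huT t ht]
  · have heval : eval (Fin.cons s b) (mulTail u M +
        ∑ s ∈ S, mulTail (u * Lagrange.basis S id s) (g s - M)) =
        u.eval s * (eval b M + ∑ s' ∈ S, (Lagrange.basis S id s').eval s *
          (eval b (g s') - eval b M)) := by
      simp only [map_add, map_sum, map_sub, eval_mulTail, Polynomial.eval_mul, mul_add, mul_sum,
        mul_assoc]
    rw [heval, sum_eval_basis_mul hs (fun s' => eval b (g s') - eval b M), hgs]
    ring

theorem exists_hasLeadTerm_of_notMem_DofA {n : ℕ} {K : Type*} [Field K] [DecidableEq K]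
    (A : Finset (Fin n → K)) {β : Fin n → ℕ} (hβ : β ∉ DofA n A) :
    ∃ f ∈ vanishingIdeal K (A : Set (Fin n → K)), HasLeadTerm f β := by
  induction n with
  | zero =>
    refine ⟨1, fun a ha => (hβ ?_).elim, ?_, fun γ _ hγβ => (hγβ (Subsingleton.elim γ β)).elim⟩
    · rw [DofA]
      exact mem_image.mpr ⟨a, ha, Subsingleton.elim _ _⟩
    · rw [coeffv, Subsingleton.elim (Finsupp.equivFunOnFinite.symm β) 0, coeff_zero_one]
  | succ n ih =>
    cases β using Fin.consCases with
    | cons j δ =>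
    rw [cons_mem_DofA_succ, not_lt] at hβ
    set P := A.image (· 0)
    choose! g hgA hg using fun s (hs : s ∈ {x ∈ P | δ ∉ DofA n (fiber A x)}) =>
      ih (fiber A s) (mem_filter.mp hs).2
    obtain ⟨f, hf, hfT, hfS⟩ := exists_hasLeadTerm_cons _ _ hβ g hg
    refine ⟨f, fun a ha => ?_, hf⟩
    rw [aeval_eq_eval, ← Fin.cons_self_tail a]
    by_cases hδ : δ ∈ DofA n (fiber A (a 0))
    · exact hfT _ (mem_filter.mpr ⟨mem_image_of_mem _ ha, hδ⟩) _
    · have hs : a 0 ∈ {x ∈ P | δ ∉ DofA n (fiber A x)} :=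
        mem_filter.mpr ⟨mem_image_of_mem _ ha, hδ⟩
      exact hfS _ hs _ (hgA _ hs _ (tail_mem_fiber ha))

theorem stmt_13_general (n : ℕ) (A : Finset (Fin n → k)) (lam : Fin n → ℕ)
    (β : Fin n → ℕ)
    (hβ : ∃ lam' : Fin n → ℕ, inE (DofA n A) lam' ∧ lexLe lam' lam ∧ lam' ≤ β) :
    ∃ f : MvPolynomial (Fin n) k,
      (coeffv f β = 1 ∧ ∀ γ : Fin n → ℕ, coeffv f γ ≠ 0 → γ ≠ β → lexLt γ β) ∧
      (∀ γ : Fin n → ℕ, coeffv f γ ≠ 0 → γ ≠ β →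
        ¬ ∃ lam' : Fin n → ℕ, inE (DofA n A) lam' ∧ lexLe lam' lam ∧ lam' ≤ γ) ∧
      (∀ a ∈ A, MvPolynomial.eval a f = 0) := by
  obtain ⟨f, hfA, hlead, hlower⟩ := exists_hasLeadTerm_lower_notMem
    (vanishingIdeal k (A : Set (Fin n → k)))
    {γ | ∃ lam' : Fin n → ℕ, inE (DofA n A) lam' ∧ lexLe lam' lam ∧ lam' ≤ γ}
    (fun _ ⟨_, hlam', _, hle⟩ => exists_hasLeadTerm_of_notMem_DofA A
      fun hγ => hlam'.1 ((isDset_DofA A).mem_of_le hγ hle))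
    hβ
  exact ⟨f, hlead, hlower, mem_vanishingIdeal_iff.mp hfA⟩

/-- Theorem 1 of the paper: let `A ⊆ kⁿ` be finite and `λ ∈ E(D(A))`.  Then for every
`β ∈ ⋃_{λ' ≤ λ} (λ' + ℕ₀ⁿ)`, where `λ'` runs over the elements of `E(D(A))` with
`λ' ≤ λ` lexicographically, there is a polynomial `f_β ∈ k[X₁,…,Xₙ]` such that
(i) the lexicographic leading term of `f_β` is `X^β` (coefficient `1`, all other
terms lexicographically lower), (ii) the exponents of all lower terms of `f_β` lie in
`ℕ₀ⁿ − ⋃_{λ' ≤ λ} (λ' + ℕ₀ⁿ)`, and (iii) `f_β(a) = 0` for all `a ∈ A`. -/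
theorem stmt_13 (n : ℕ) (A : Finset (Fin n → k)) (lam : Fin n → ℕ)
    (hlam : inE (DofA n A) lam) (β : Fin n → ℕ)
    (hβ : ∃ lam' : Fin n → ℕ, inE (DofA n A) lam' ∧ lexLe lam' lam ∧ lam' ≤ β) :
    ∃ f : MvPolynomial (Fin n) k,
      (coeffv f β = 1 ∧ ∀ γ : Fin n → ℕ, coeffv f γ ≠ 0 → γ ≠ β → lexLt γ β) ∧
      (∀ γ : Fin n → ℕ, coeffv f γ ≠ 0 → γ ≠ β →
        ¬ ∃ lam' : Fin n → ℕ, inE (DofA n A) lam' ∧ lexLe lam' lam ∧ lam' ≤ γ) ∧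
      (∀ a ∈ A, MvPolynomial.eval a f = 0) :=
  stmt_13_general n A lam β hβ
end

section
/- Let k be a field and A a finite set of points of k^n, and let λ be the minimal element of E(D(A)) with respect to the lexicographic ordering. Then λ = (#p(A), 0, …, 0), where p(A) ⊆ k is the image of A under the projection onto the first coordinate; consequently the polynomial ∏_{a₁ ∈ p(A)} (X_1 − a₁) lies in the vanishing ideal I(A), has lexicographic leading term X_1^{#p(A)} = X^λ, and all its lower terms have exponents strictly below λ (hence outside λ + ℕ₀^n). -/
variable {k : Type*} [Field k] [DecidableEq k]

/-!
`D(B)` contains the origin whenever `B` is nonempty, so every fiber `H(a₁)` contributes to the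
first axis and `D(A)` meets it in exactly the points `(t, 0, …, 0)` with `t < #p(A)`. Hence
`(#p(A), 0, …, 0)` lies in `E(D(A))`, while everything lexicographically below it has the form
`(t, 0, …, 0)` with `t < #p(A)` and so lies in `D(A)`. The polynomial `∏ (X₁ - a₁)` is a monic
univariate polynomial of degree `#p(A)` in `X₁`, so its monomials are the `X₁ʲ` with
`j ≤ #p(A)`.
-/

open Finset

lemma Fin.tail_pi_single_zero {n : ℕ} {M : Type*} [Zero M] (t : M) :
    Fin.tail (Pi.single 0 t : Fin (n + 1) → M) = 0 := by
  funext j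
  simp [Fin.tail, Fin.succ_ne_zero]

lemma Fin.cons_zero_fun_eq_pi_single {n : ℕ} {M : Type*} [Zero M] (t : M) :
    (Fin.cons t (fun _ => 0) : Fin (n + 1) → M) = Pi.single 0 t := by
  funext i
  cases i using Fin.cases <;> simp [Fin.succ_ne_zero]

lemma lexLt_pi_single_zero_iff {n : ℕ} (α : Fin (n + 1) → ℕ) (t : ℕ) :
    lexLt α (Pi.single 0 t) ↔ α = Pi.single 0 (α 0) ∧ α 0 < t := by
  constructor
  · rintro ⟨i, hlt, hafter⟩
    obtain rfl : i = 0 := by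
      by_contra hi0
      rw [Pi.single_eq_of_ne hi0] at hlt
      exact Nat.not_lt_zero _ hlt
    refine ⟨funext fun j => ?_, by simpa using hlt⟩
    rcases eq_or_ne j 0 with rfl | hj
    · simp
    · rw [hafter j (Fin.pos_iff_ne_zero.mpr hj), Pi.single_eq_of_ne hj, Pi.single_eq_of_ne hj]
  · rintro ⟨hα, hlt⟩
    refine ⟨0, by simpa using hlt, fun j hj => ?_⟩
    rw [hα, Pi.single_eq_of_ne hj.ne', Pi.single_eq_of_ne hj.ne']

section DofA

variable {k : Type*} [DecidableEq k]

lemma mem_DofA_succ {n : ℕ} (A : Finset (Fin (n + 1) → k)) (d : Fin (n + 1) → ℕ) :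
    d ∈ DofA (n + 1) A ↔
      (∃ a1 ∈ A.image (fun a => a 0),
          Fin.tail d ∈ DofA n ((A.filter (fun a => a 0 = a1)).image Fin.tail)) ∧
      d 0 < ((A.image (fun a => a 0)).filter fun a1 =>
          Fin.tail d ∈ DofA n ((A.filter (fun a => a 0 = a1)).image Fin.tail)).card := by
  simp only [DofA, mem_biUnion]
  constructor
  · rintro ⟨dh, hdh, hmem⟩
    obtain ⟨j, hj, rfl⟩ := mem_image.mp hmem
    rw [Fin.tail_cons, Fin.cons_zero]
    exact ⟨hdh, mem_range.mp hj⟩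
  · rintro ⟨hd, hlt⟩
    exact ⟨Fin.tail d, hd, mem_image.mpr ⟨d 0, mem_range.mpr hlt, Fin.cons_self_tail d⟩⟩

lemma zero_mem_DofA :
    ∀ (n : ℕ) {B : Finset (Fin n → k)}, B.Nonempty → (0 : Fin n → ℕ) ∈ DofA n B
  | 0, B, ⟨b, hb⟩ => mem_image.mpr ⟨b, hb, rfl⟩
  | n + 1, B, ⟨b, hb⟩ => by
      have hfiber :
          (0 : Fin n → ℕ) ∈ DofA n ((B.filter (fun a => a 0 = b 0)).image Fin.tail) :=
        zero_mem_DofA n ⟨Fin.tail b, mem_image_of_mem _ (mem_filter.mpr ⟨hb, rfl⟩)⟩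
      have hb0 : b 0 ∈ B.image (fun a => a 0) := mem_image_of_mem _ hb
      rw [mem_DofA_succ]
      exact ⟨⟨b 0, hb0, hfiber⟩, card_pos.mpr ⟨b 0, mem_filter.mpr ⟨hb0, hfiber⟩⟩⟩

variable {n : ℕ}

lemma pi_single_zero_mem_DofA_iff (A : Finset (Fin (n + 1) → k)) (t : ℕ) :
    Pi.single 0 t ∈ DofA (n + 1) A ↔ t < (A.image (fun a => a 0)).card := by
  have hfiber : ∀ a1 ∈ A.image (fun a => a 0),
      (0 : Fin n → ℕ) ∈ DofA n ((A.filter (fun a => a 0 = a1)).image Fin.tail) := by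
    intro a1 ha1
    obtain ⟨a, ha, rfl⟩ := mem_image.mp ha1
    exact zero_mem_DofA n ⟨Fin.tail a, mem_image_of_mem _ (mem_filter.mpr ⟨ha, rfl⟩)⟩
  rw [mem_DofA_succ, Fin.tail_pi_single_zero, Pi.single_eq_same, filter_true_of_mem hfiber]
  refine ⟨And.right, fun ht => ⟨?_, ht⟩⟩
  obtain ⟨a1, ha1⟩ := card_pos.mp (t.zero_le.trans_lt ht)
  exact ⟨a1, ha1, hfiber a1 ha1⟩

lemma inE_DofA_pi_single_zero_card (A : Finset (Fin (n + 1) → k)) :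
    inE (DofA (n + 1) A) (Pi.single 0 (A.image (fun a => a 0)).card) := by
  refine ⟨fun h => lt_irrefl _ ((pi_single_zero_mem_DofA_iff A _).mp h), fun i hi => ?_⟩
  obtain rfl : i = 0 := by
    by_contra hi0
    exact hi (Pi.single_eq_of_ne hi0 _)
  rw [Pi.single_eq_same] at hi
  have hsub : (Pi.single 0 (A.image (fun a => a 0)).card - Pi.single 0 1 : Fin (n + 1) → ℕ)
      = Pi.single 0 ((A.image (fun a => a 0)).card - 1) := by
    funext j
    by_cases hj : j = 0 <;> simp [hj]
  rw [hsub, pi_single_zero_mem_DofA_iff]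
  omega

lemma eq_of_inE_DofA_of_lexLe {A : Finset (Fin (n + 1) → k)} {lam : Fin (n + 1) → ℕ}
    (hlam : inE (DofA (n + 1) A) lam)
    (hle : lexLe lam (Pi.single 0 (A.image (fun a => a 0)).card)) :
    lam = Pi.single 0 (A.image (fun a => a 0)).card := by
  refine hle.resolve_left fun hlt => ?_
  obtain ⟨hlam_eq, hlt0⟩ := (lexLt_pi_single_zero_iff lam _).mp hlt
  apply hlam.1
  rw [hlam_eq, pi_single_zero_mem_DofA_iff]
  exact hlt0

end DofA

lemma MvPolynomial.coeff_toMvPolynomial {R σ : Type*} [CommSemiring R] [DecidableEq σ]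
    (p : Polynomial R) (i : σ) (m : σ →₀ ℕ) :
    (p.toMvPolynomial i).coeff m = if m = Finsupp.single i (m i) then p.coeff (m i) else 0 := by
  conv_lhs => rw [p.as_sum_support]
  simp only [map_sum, ← Polynomial.C_mul_X_pow_eq_monomial, map_mul, Polynomial.toMvPolynomial_C,
    map_pow, Polynomial.toMvPolynomial_X, MvPolynomial.C_mul_X_pow_eq_monomial,
    MvPolynomial.coeff_sum, MvPolynomial.coeff_monomial]
  split_ifs with hm
  · rw [hm]
    simp only [(Finsupp.single_injective i).eq_iff, Finset.sum_ite_eq', Finsupp.single_eq_same,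
      ite_eq_left_iff, Polynomial.mem_support_iff, not_not]
    exact Eq.symm
  · refine Finset.sum_eq_zero fun j _ => if_neg ?_
    rintro rfl
    exact hm (by rw [Finsupp.single_eq_same])

lemma coeffv_toMvPolynomial {R : Type*} [CommSemiring R] {n : ℕ} (p : Polynomial R) (i : Fin n)
    (γ : Fin n → ℕ) :
    coeffv (p.toMvPolynomial i) γ = if γ = Pi.single i (γ i) then p.coeff (γ i) else 0 := by
  simp only [coeffv, MvPolynomial.coeff_toMvPolynomial, Finsupp.coe_equivFunOnFinite_symm,
    Equiv.symm_apply_eq, Finsupp.equivFunOnFinite_single]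

lemma eq_pi_single_of_coeffv_toMvPolynomial_ne_zero {R : Type*} [CommSemiring R] {n : ℕ}
    {p : Polynomial R} {i : Fin n} {γ : Fin n → ℕ} (h : coeffv (p.toMvPolynomial i) γ ≠ 0) :
    γ = Pi.single i (γ i) ∧ γ i ≤ p.natDegree := by
  rw [coeffv_toMvPolynomial] at h
  split_ifs at h with hγ
  · exact ⟨hγ, Polynomial.le_natDegree_of_ne_zero h⟩
  · exact (h rfl).elim

/-- If `λ` is the lexicographically minimal element of `E(D(A))`, then
`λ = (#p(A), 0, …, 0)` where `p(A)` is the set of first coordinates of points of `A`;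
consequently `g = ∏_{a₁ ∈ p(A)} (X₁ − a₁)` vanishes at every point of `A`, its
lexicographic leading term is `X₁^{#p(A)} = X^λ` (coefficient `1`), and every exponent
of a lower term of `g` is lexicographically strictly below `λ` (hence lies outside
`λ + ℕ₀ⁿ`). -/
theorem stmt_18 (n : ℕ) (A : Finset (Fin (n + 1) → k)) (lam : Fin (n + 1) → ℕ)
    (hlam : inE (DofA (n + 1) A) lam)
    (hmin : ∀ μ : Fin (n + 1) → ℕ, inE (DofA (n + 1) A) μ → lexLe lam μ) :
    lam = Fin.cons (A.image (fun a => a 0)).card (fun _ => 0) ∧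
    (∀ a ∈ A, MvPolynomial.eval a
        (∏ a1 ∈ A.image (fun a => a 0),
          (MvPolynomial.X 0 - MvPolynomial.C a1 : MvPolynomial (Fin (n + 1)) k)) = 0) ∧
    coeffv (∏ a1 ∈ A.image (fun a => a 0),
        (MvPolynomial.X 0 - MvPolynomial.C a1 : MvPolynomial (Fin (n + 1)) k)) lam = 1 ∧
    (∀ γ : Fin (n + 1) → ℕ,
      coeffv (∏ a1 ∈ A.image (fun a => a 0),
          (MvPolynomial.X 0 - MvPolynomial.C a1 : MvPolynomial (Fin (n + 1)) k)) γ ≠ 0 →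
        γ ≠ lam → lexLt γ lam ∧ ¬ lam ≤ γ) := by
  set P := A.image (fun a => a 0)
  set q : Polynomial k := ∏ a1 ∈ P, (Polynomial.X - Polynomial.C a1)
  have hlam_eq : lam = Pi.single 0 P.card :=
    eq_of_inE_DofA_of_lexLe hlam (hmin _ (inE_DofA_pi_single_zero_card A))
  have hprod : ∏ a1 ∈ P, (MvPolynomial.X 0 - MvPolynomial.C a1 : MvPolynomial (Fin (n + 1)) k)
      = q.toMvPolynomial 0 := by
    simp only [q, map_prod, map_sub, Polynomial.toMvPolynomial_X, Polynomial.toMvPolynomial_C]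
  have hdeg : q.natDegree = P.card := Polynomial.natDegree_finsetProd_X_sub_C_eq_card P id
  rw [hprod, hlam_eq, Fin.cons_zero_fun_eq_pi_single]
  refine ⟨rfl, fun a ha => ?_, ?_, fun γ hγ hne => ?_⟩
  · rw [MvPolynomial.eval_toMvPolynomial, Polynomial.eval_prod]
    exact prod_eq_zero (mem_image_of_mem _ ha) (by simp)
  · rw [coeffv_toMvPolynomial, Pi.single_eq_same, if_pos rfl, ← hdeg]
    exact (Polynomial.monic_prod_X_sub_C id P).coeff_natDegree
  · obtain ⟨hγ_eq, hγ_le⟩ := eq_pi_single_of_coeffv_toMvPolynomial_ne_zero hγ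
    have hlt : γ 0 < P.card := (hdeg ▸ hγ_le).lt_of_ne fun h => hne (by rw [hγ_eq, h])
    refine ⟨(lexLt_pi_single_zero_iff γ _).mpr ⟨hγ_eq, hlt⟩, fun hle => ?_⟩
    exact (hle 0).not_gt (by rwa [Pi.single_eq_same])
end
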